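/- Let K be any commutative semiring (not necessarily positive) and let π : Lit_A → K be a model-defining K-interpretation, with 𝔄_π the model it defines. Then for every first-order sentence φ over 𝒱: if π⟦φ⟧ ≠ 0 then 𝔄_π ⊨ φ. -/

import Mathlib

/-- A finite relational vocabulary: a type of relation symbols with arities. -/
structure Vocab : Type 1 where
  Rel : Type
  arity : Rel → ℕ

/-- First-order formulas over a relational vocabulary `𝒱` (with equality),
with variables from `Vars`.  Negated atoms are included as primitive literals. -/
inductive Formula (𝒱 : Vocab) (Vars : Type) : Type where
  | rel    : (R : 𝒱.Rel) → (Fin (𝒱.arity R) → Vars) → Formula 𝒱 Vars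
  | nrel   : (R : 𝒱.Rel) → (Fin (𝒱.arity R) → Vars) → Formula 𝒱 Vars
  | equal  : Vars → Vars → Formula 𝒱 Vars
  | nequal : Vars → Vars → Formula 𝒱 Vars
  | and    : Formula 𝒱 Vars → Formula 𝒱 Vars → Formula 𝒱 Vars
  | or     : Formula 𝒱 Vars → Formula 𝒱 Vars → Formula 𝒱 Vars
  | all    : Vars → Formula 𝒱 Vars → Formula 𝒱 Vars
  | ex     : Vars → Formula 𝒱 Vars → Formula 𝒱 Vars
  | not    : Formula 𝒱 Vars → Formula 𝒱 Vars

/-- A ground literal over vocabulary `𝒱` and universe `A`: a positive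
(`pos = true`) or negated (`pos = false`) ground atom `R(ā)`. -/
structure Lit (𝒱 : Vocab) (A : Type) where
  pos : Bool
  R : 𝒱.Rel
  args : Fin (𝒱.arity R) → A

/-- Negation of a literal (the negation of a literal is again a literal). -/
def Lit.neg {𝒱 : Vocab} {A : Type} (L : Lit 𝒱 A) : Lit 𝒱 A := ⟨!L.pos, L.R, L.args⟩

namespace Formula

variable {𝒱 : Vocab} {Vars : Type}

/-- Size of a formula (used for termination of the semiring semantics). -/
def size : Formula 𝒱 Vars → ℕ
  | rel _ _ => 1
  | nrel _ _ => 1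
  | equal _ _ => 1
  | nequal _ _ => 1
  | and φ ψ => φ.size + ψ.size + 1
  | or φ ψ => φ.size + ψ.size + 1
  | all _ φ => φ.size + 1
  | ex _ φ => φ.size + 1
  | not φ => φ.size + 1

mutual
/-- Negation normal form of a formula. -/
def nnf : Formula 𝒱 Vars → Formula 𝒱 Vars
  | rel R v => rel R v
  | nrel R v => nrel R v
  | equal x y => equal x y
  | nequal x y => nequal x y
  | and φ ψ => and φ.nnf ψ.nnf
  | or φ ψ => or φ.nnf ψ.nnf
  | all x φ => all x φ.nnf
  | ex x φ => ex x φ.nnf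
  | not φ => nnfNeg φ

/-- Negation normal form of the negation of a formula: `nnfNeg φ = nnf (¬φ)`. -/
def nnfNeg : Formula 𝒱 Vars → Formula 𝒱 Vars
  | rel R v => nrel R v
  | nrel R v => rel R v
  | equal x y => nequal x y
  | nequal x y => equal x y
  | and φ ψ => or (nnfNeg φ) (nnfNeg ψ)
  | or φ ψ => and (nnfNeg φ) (nnfNeg ψ)
  | all x φ => ex x (nnfNeg φ)
  | ex x φ => all x (nnfNeg φ)
  | not φ => nnf φ
end

theorem size_nnf_le (φ : Formula 𝒱 Vars) : φ.nnf.size ≤ φ.size ∧ (nnfNeg φ).size ≤ φ.size := by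
  induction φ <;> simp_all [nnf, nnfNeg, size] <;> omega

/-- Free variables of a formula. -/
def FV [DecidableEq Vars] : Formula 𝒱 Vars → Finset Vars
  | rel _ v => Finset.image v Finset.univ
  | nrel _ v => Finset.image v Finset.univ
  | equal x y => {x, y}
  | nequal x y => {x, y}
  | and φ ψ => φ.FV ∪ ψ.FV
  | or φ ψ => φ.FV ∪ ψ.FV
  | all x φ => φ.FV.erase x
  | ex x φ => φ.FV.erase x
  | not φ => φ.FV

end Formula

section Semantics

variable {𝒱 : Vocab} {Vars A K : Type} [DecidableEq Vars] [Fintype A] [DecidableEq A]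
  [CommSemiring K]

/-- The extension of a `K`-interpretation `π : Lit 𝒱 A → K` to first-order formulas,
relative to a valuation `ν : Vars → A`:  `eval π φ ν = π⟦φ⟧ν`. -/
def eval (π : Lit 𝒱 A → K) : Formula 𝒱 Vars → (Vars → A) → K
  | .rel R v, ν => π ⟨true, R, fun i => ν (v i)⟩
  | .nrel R v, ν => π ⟨false, R, fun i => ν (v i)⟩
  | .equal x y, ν => if ν x = ν y then 1 else 0
  | .nequal x y, ν => if ν x ≠ ν y then 1 else 0
  | .and φ ψ, ν => eval π φ ν * eval π ψ ν
  | .or φ ψ, ν => eval π φ ν + eval π ψ ν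
  | .all x φ, ν => ∏ a : A, eval π φ (Function.update ν x a)
  | .ex x φ, ν => ∑ a : A, eval π φ (Function.update ν x a)
  | .not φ, ν => eval π (Formula.nnfNeg φ) ν
termination_by φ _ => φ.size
decreasing_by
  all_goals simp [Formula.size]
  all_goals first
    | omega
    | exact Nat.lt_succ_of_le (Formula.size_nnf_le _).2
    | exact (Formula.size_nnf_le _).2

end Semantics

/-- A `𝒱`-structure with universe `A`: an interpretation of each relation symbol. -/
def Struc (𝒱 : Vocab) (A : Type) := (R : 𝒱.Rel) → (Fin (𝒱.arity R) → A) → Prop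

/-- Standard (Tarski) satisfaction of a literal in a structure. -/
def Struc.SatLit {𝒱 : Vocab} {A : Type} (𝔄 : Struc 𝒱 A) (L : Lit 𝒱 A) : Prop :=
  if L.pos then 𝔄 L.R L.args else ¬ 𝔄 L.R L.args

section Sat

variable {𝒱 : Vocab} {Vars A : Type} [DecidableEq Vars]

/-- Standard (Tarski) satisfaction relation `𝔄 ⊨ φ[ν]`. -/
def Sat (𝔄 : Struc 𝒱 A) : Formula 𝒱 Vars → (Vars → A) → Prop
  | .rel R v, ν => 𝔄 R (fun i => ν (v i))
  | .nrel R v, ν => ¬ 𝔄 R (fun i => ν (v i))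
  | .equal x y, ν => ν x = ν y
  | .nequal x y, ν => ν x ≠ ν y
  | .and φ ψ, ν => Sat 𝔄 φ ν ∧ Sat 𝔄 ψ ν
  | .or φ ψ, ν => Sat 𝔄 φ ν ∨ Sat 𝔄 ψ ν
  | .all x φ, ν => ∀ a : A, Sat 𝔄 φ (Function.update ν x a)
  | .ex x φ, ν => ∃ a : A, Sat 𝔄 φ (Function.update ν x a)
  | .not φ, ν => ¬ Sat 𝔄 φ ν

end Sat

section ModelDefining

variable {𝒱 : Vocab} {A K : Type} [CommSemiring K]

/-- A `K`-interpretation is model-defining if for each fact exactly one of the values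
assigned to it and to its negation is `0`. -/
def ModelDefining (π : Lit 𝒱 A → K) : Prop :=
  ∀ L : Lit 𝒱 A, (π L = 0 ∧ π L.neg ≠ 0) ∨ (π L ≠ 0 ∧ π L.neg = 0)

/-- The structure `𝔄_π` defined by a model-defining interpretation `π`:
it satisfies a literal `L` iff `π L ≠ 0`. -/
def StrucOf (π : Lit 𝒱 A → K) : Struc 𝒱 A := fun R a => π ⟨true, R, a⟩ ≠ 0

end ModelDefining

/-- A commutative semiring is positive if it is `+`-positive and has no divisors of zero. -/
def IsPositive (K : Type) [CommSemiring K] : Prop :=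
  (∀ a b : K, a + b = 0 → a = 0 ∧ b = 0) ∧ ∀ a b : K, a * b = 0 → a = 0 ∨ b = 0

/-! Induction on `φ`, proving at the same time that `π⟦φ⟧ν ≠ 0` forces `𝔄_π ⊨ φ[ν]` and that
`π⟦¬φ⟧ν ≠ 0` forces `𝔄_π ⊭ φ[ν]`; the two statements feed each other at negations. Each step
only uses that a product with a zero factor and a sum of zeros are zero, which holds in every
commutative semiring, so positivity of `K` is never needed. -/

theorem satLit_strucOf_iff {𝒱 : Vocab} {A K : Type} [CommSemiring K] {π : Lit 𝒱 A → K}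
    (hπ : ModelDefining π) (L : Lit 𝒱 A) :
    (StrucOf π).SatLit L ↔ π L ≠ 0 := by
  obtain ⟨_ | _, R, a⟩ := L
  · have := hπ ⟨true, R, a⟩
    simp only [Lit.neg, Bool.not_true] at this
    simp only [Struc.SatLit, StrucOf, if_neg Bool.false_ne_true, not_not]
    tauto
  · exact Iff.rfl

section Soundness

variable {𝒱 : Vocab} {Vars A K : Type} [DecidableEq Vars] [Fintype A] [DecidableEq A]
  [CommSemiring K]

theorem eval_not (π : Lit 𝒱 A → K) (φ : Formula 𝒱 Vars) (ν : Vars → A) :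
    eval π (.not φ) ν = eval π φ.nnfNeg ν := by
  rw [eval]

theorem eval_nnf (π : Lit 𝒱 A → K) (φ : Formula 𝒱 Vars) (ν : Vars → A) :
    eval π φ.nnf ν = eval π φ ν := by
  induction φ generalizing ν with
  | rel | nrel | equal | nequal => rfl
  | and φ ψ ihφ ihψ | or φ ψ ihφ ihψ => simp only [Formula.nnf, eval, ihφ, ihψ]
  | all x φ ih | ex x φ ih => simp only [Formula.nnf, eval, ih]
  | not φ => rw [Formula.nnf, eval_not]

theorem sat_of_eval_ne_zero_and_not_sat_of_eval_nnfNeg_ne_zero {π : Lit 𝒱 A → K}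
    (hπ : ModelDefining π) (φ : Formula 𝒱 Vars) (ν : Vars → A) :
    (eval π φ ν ≠ 0 → Sat (StrucOf π) φ ν) ∧
      (eval π φ.nnfNeg ν ≠ 0 → ¬ Sat (StrucOf π) φ ν) := by
  have ne_zero_or_ne_zero_of_add {a b : K} (h : a + b ≠ 0) : a ≠ 0 ∨ b ≠ 0 := by
    by_contra! hab
    exact h (by rw [hab.1, hab.2, add_zero])
  induction φ generalizing ν with
  | rel R v =>
    simp only [eval, Formula.nnfNeg, Sat]
    exact ⟨(satLit_strucOf_iff hπ ⟨true, R, _⟩).2, (satLit_strucOf_iff hπ ⟨false, R, _⟩).2⟩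
  | nrel R v =>
    simp only [eval, Formula.nnfNeg, Sat]
    exact ⟨(satLit_strucOf_iff hπ ⟨false, R, _⟩).2,
      fun h => not_not.2 ((satLit_strucOf_iff hπ ⟨true, R, _⟩).2 h)⟩
  | equal x y | nequal x y =>
    simp only [eval, Formula.nnfNeg, Sat]
    constructor <;> intro h <;> by_contra hs <;> simp [hs] at h
  | and φ ψ ihφ ihψ =>
    simp only [eval, Formula.nnfNeg, Sat, not_and_or]
    refine ⟨fun h => ⟨(ihφ ν).1 (left_ne_zero_of_mul h), (ihψ ν).1 (right_ne_zero_of_mul h)⟩,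
      fun h => (ne_zero_or_ne_zero_of_add h).imp (ihφ ν).2 (ihψ ν).2⟩
  | or φ ψ ihφ ihψ =>
    simp only [eval, Formula.nnfNeg, Sat, not_or]
    refine ⟨fun h => (ne_zero_or_ne_zero_of_add h).imp (ihφ ν).1 (ihψ ν).1,
      fun h => ⟨(ihφ ν).2 (left_ne_zero_of_mul h), (ihψ ν).2 (right_ne_zero_of_mul h)⟩⟩
  | all x φ ih =>
    simp only [eval, Formula.nnfNeg, Sat, not_forall]
    refine ⟨fun h a => (ih _).1 fun ha => h (Finset.prod_eq_zero (Finset.mem_univ a) ha),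
      fun h => ?_⟩
    obtain ⟨a, -, ha⟩ := Finset.exists_ne_zero_of_sum_ne_zero h
    exact ⟨a, (ih _).2 ha⟩
  | ex x φ ih =>
    simp only [eval, Formula.nnfNeg, Sat, not_exists]
    refine ⟨fun h => ?_,
      fun h a => (ih _).2 fun ha => h (Finset.prod_eq_zero (Finset.mem_univ a) ha)⟩
    obtain ⟨a, -, ha⟩ := Finset.exists_ne_zero_of_sum_ne_zero h
    exact ⟨a, (ih _).1 ha⟩
  | not φ ih =>
    rw [eval_not, Formula.nnfNeg, eval_nnf]
    exact ⟨(ih ν).2, fun h hs => hs ((ih ν).1 h)⟩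

end Soundness

/-- for any commutative semiring `K` (positive or not) and a
model-defining `K`-interpretation `π`, if `π⟦φ⟧ ≠ 0` then `𝔄_π ⊨ φ`. -/
theorem sat_of_eval_ne_zero {𝒱 : Vocab} {Vars A K : Type} [DecidableEq Vars]
    [Fintype A] [DecidableEq A] [Nonempty A] [CommSemiring K]
    (π : Lit 𝒱 A → K) (hπ : ModelDefining π)
    (φ : Formula 𝒱 Vars) (hφ : φ.FV = ∅) (ν : Vars → A)
    (h : eval π φ ν ≠ 0) :
    Sat (StrucOf π) φ ν :=
  (sat_of_eval_ne_zero_and_not_sat_of_eval_nnfNeg_ne_zero hπ φ ν).1 h
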